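/- arXiv:2211.00476 — 2 statements merged into one kernel-verified Lean document; each statement's English description precedes it below -/
import Mathlib

section
/- Let n = kr and let w ∈ S_n satisfy w(Δ_n^k) ⊆ Δ_n^k ∪ J for some J ⊆ Δ_n(k), where simple roots i ∈ Δ_n are identified with the pairs (i, i+1) and w acts on a simple root index i by w(i) = j when w maps the root e_i − e_{i+1} to e_j − e_{j+1} (i.e. w(i+1) = w(i)+1). Then w(Δ_n^k) = Δ_n^k. -/
/-!
Inside each block `{qr + 1, …, qr + r}` the permutation `w` moves by steps of `+1`. Reading this
backwards, induction on `y` shows `w⁻¹ y ≡ y [MOD r]` for `y ≤ n`: if `r ∤ y` then `w⁻¹ y` is not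
the end of a block, so `w⁻¹ (y + 1) = w⁻¹ y + 1`; if `r ∣ y` then `w⁻¹ (y + 1)` must start a block,
since otherwise its predecessor would be sent to `y` and be `≡ 0`. Thus `w` preserves residues
mod `r` on `{0, …, n}`, hence preserves the non-multiples of `r` in `Δ_n`, which form `Δ_n^k`.
-/

/-- `Δ_n = {1, …, n-1}`, the set of simple roots of `GL_n`. -/
def delta (n : ℕ) : Finset ℕ := Finset.Icc 1 (n - 1)

/-- The parabolic subgroup `W_S` generated by the transpositions `(i, i+1)`, `i ∈ S`. -/
def parab (S : Finset ℕ) : Subgroup (Equiv.Perm ℕ) :=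
  Subgroup.closure {σ | ∃ i ∈ S, σ = Equiv.swap i (i + 1)}

/-- `Δ_n(k) = {r, 2r, …, (k-1)r}` (for `n = k * r`). -/
def deltaK (k r : ℕ) : Finset ℕ := (Finset.Icc 1 (k - 1)).image (· * r)

open Pointwise

theorem mem_delta_sdiff_deltaK {k r i : ℕ} :
    i ∈ delta (k * r) \ deltaK k r ↔ i < k * r ∧ ¬ r ∣ i := by
  simp only [delta, deltaK, Finset.mem_sdiff, Finset.mem_Icc, Finset.mem_image]
  constructor
  · rintro ⟨⟨hi1, hin⟩, hiK⟩
    refine ⟨by omega, ?_⟩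
    rintro ⟨j, rfl⟩
    have hj : j < k := Nat.lt_of_mul_lt_mul_left (a := r) (by rw [mul_comm r k]; omega)
    exact hiK ⟨j, ⟨Nat.pos_of_mul_pos_left hi1, by omega⟩, mul_comm j r⟩
  · rintro ⟨hin, hri⟩
    refine ⟨⟨Nat.pos_of_ne_zero fun h => hri (h ▸ dvd_zero r), by omega⟩, ?_⟩
    rintro ⟨j, -, rfl⟩
    exact hri (dvd_mul_left r j)

theorem parab_le_stabilizer {S : Finset ℕ} {A : Set ℕ} (hA : ∀ i ∈ S, (i ∈ A ↔ i + 1 ∈ A)) :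
    parab S ≤ MulAction.stabilizer (Equiv.Perm ℕ) A := by
  refine Subgroup.closure_le _ |>.2 ?_
  rintro _ ⟨i, hi, rfl⟩
  rw [SetLike.mem_coe, MulAction.mem_stabilizer_iff]
  ext x
  rw [Set.mem_smul_set_iff_inv_smul_mem, Equiv.swap_inv, Equiv.Perm.smul_def, Equiv.swap_apply_def]
  split_ifs with hxi hxi'
  · rw [hxi, hA i hi]
  · rw [hxi', hA i hi]
  · rfl

theorem apply_mem_iff_of_mem_parab {S : Finset ℕ} {A : Set ℕ}
    (hA : ∀ i ∈ S, (i ∈ A ↔ i + 1 ∈ A)) {w : Equiv.Perm ℕ} (hw : w ∈ parab S) (x : ℕ) :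
    w x ∈ A ↔ x ∈ A := by
  have hwA : w • A = A := MulAction.mem_stabilizer_iff.1 (parab_le_stabilizer hA hw)
  simpa only [hwA, Equiv.Perm.smul_def] using Set.smul_mem_smul_set_iff (a := w) (s := A) (x := x)

theorem apply_zero_of_mem_parab_delta {n : ℕ} {w : Equiv.Perm ℕ} (hw : w ∈ parab (delta n)) :
    w 0 = 0 := by
  refine (apply_mem_iff_of_mem_parab (A := {0}) ?_ hw 0).2 rfl
  intro i hi
  simp only [delta, Finset.mem_Icc] at hi
  simp only [Set.mem_singleton_iff]
  omega

theorem apply_le_iff_of_mem_parab_delta {n : ℕ} {w : Equiv.Perm ℕ} (hw : w ∈ parab (delta n))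
    (x : ℕ) : w x ≤ n ↔ x ≤ n := by
  refine apply_mem_iff_of_mem_parab (A := Set.Iic n) ?_ hw x
  intro i hi
  simp only [delta, Finset.mem_Icc] at hi
  simp only [Set.mem_Iic]
  omega

theorem apply_modEq_self_of_apply_succ {r n : ℕ} (hrn : r ∣ n) {w : Equiv.Perm ℕ} (h0 : w 0 = 0)
    (hle : ∀ x, w x ≤ n ↔ x ≤ n) (hstep : ∀ i < n, ¬ r ∣ i → w (i + 1) = w i + 1)
    {x : ℕ} (hx : x ≤ n) : w x ≡ x [MOD r] := by
  suffices h : ∀ y ≤ n, w.symm y ≡ y [MOD r] by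
    simpa using (h (w x) ((hle x).2 hx)).symm
  have hle_symm : ∀ y ≤ n, w.symm y ≤ n := fun y hy => (hle _).1 (by simpa using hy)
  intro y hy
  induction y with
  | zero => rw [w.symm_apply_eq.2 h0.symm]
  | succ y ih =>
    have ih := ih (by omega)
    by_cases hend : r ∣ w.symm y
    · have hry : r ∣ y := (ih.dvd_iff dvd_rfl).1 hend
      have hstart : r ∣ w.symm (y + 1) - 1 := by
        by_contra hstart
        have hne : w.symm (y + 1) - 1 ≠ 0 := fun h => hstart (h ▸ dvd_zero r)
        have hpred : w (w.symm (y + 1) - 1) = y := by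
          have := hstep _ (by have := hle_symm (y + 1) hy; omega) hstart
          rw [Nat.sub_add_cancel (by omega), Equiv.apply_symm_apply] at this
          omega
        exact hstart (Equiv.eq_symm_apply w |>.2 hpred ▸ hend)
      have hmod : w.symm (y + 1) - 1 ≡ y [MOD r] :=
        (Nat.modEq_zero_iff_dvd.2 hstart).trans (Nat.modEq_zero_iff_dvd.2 hry).symm
      have hpos : w.symm (y + 1) ≠ 0 := fun h => by
        have := w.apply_symm_apply (y + 1)
        rw [h, h0] at this
        omega
      simpa [Nat.sub_add_cancel (Nat.pos_of_ne_zero hpos)] using hmod.add_right 1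
    · have hlt : w.symm y < n :=
        lt_of_le_of_ne (hle_symm y (by omega)) fun h => hend (h ▸ hrn)
      have hsucc : w.symm (y + 1) = w.symm y + 1 := by
        rw [Equiv.symm_apply_eq, hstep _ hlt hend, Equiv.apply_symm_apply]
      rw [hsucc]
      exact ih.add_right 1

theorem image_deltaNk_eq_general (k r n : ℕ) (hn : n = k * r)
    (w : Equiv.Perm ℕ) (hw : w ∈ parab (delta n))
    (hsimple : ∀ i ∈ delta n \ deltaK k r, w (i + 1) = w i + 1) :
    ∀ i ∈ delta n \ deltaK k r, w i ∈ delta n \ deltaK k r := by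
  subst hn
  have hle := apply_le_iff_of_mem_parab_delta hw
  have hmod : ∀ x ≤ k * r, w x ≡ x [MOD r] :=
    fun x => apply_modEq_self_of_apply_succ (dvd_mul_left r k) (apply_zero_of_mem_parab_delta hw)
      hle (fun i hi hri => hsimple i (mem_delta_sdiff_deltaK.2 ⟨hi, hri⟩))
  intro i hi
  rw [mem_delta_sdiff_deltaK] at hi ⊢
  have hwi : ¬ r ∣ w i := ((hmod i hi.1.le).dvd_iff dvd_rfl).not.2 hi.2
  exact ⟨lt_of_le_of_ne ((hle i).2 hi.1.le) fun h => hwi (h ▸ dvd_mul_left r k), hwi⟩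

theorem image_deltaNk_eq (k r n : ℕ) (hk : 0 < k) (hr : 0 < r) (hn : n = k * r)
    (J : Finset ℕ) (hJ : J ⊆ deltaK k r)
    (w : Equiv.Perm ℕ) (hw : w ∈ parab (delta n))
    (hsimple : ∀ i ∈ delta n \ deltaK k r, w (i + 1) = w i + 1)
    (himage : ∀ i ∈ delta n \ deltaK k r, w i ∈ (delta n \ deltaK k r) ∪ J) :
    ∀ i ∈ delta n \ deltaK k r, w i ∈ delta n \ deltaK k r :=
  image_deltaNk_eq_general k r n hn w hw hsimple
end

section
/- Let n = kr, I ⊆ Δ_n(k), and let w ∈ W(L^{⟨r⟩}) ∩ [W_{Δ_n^k ∪ I} \ S_n]. Then w satisfies w^{-1}(Δ_n^k ∪ I) ⊆ Δ_n^k ∪ J for J ⊆ Δ_n(k) if and only if the corresponding permutation of blocks carries the composition of k determined by I into coarsenings compatible with J; in particular, for I = J = ∅, W(L^{⟨r⟩}) ∩ [W^{⟨r⟩} \ S_n / W^{⟨r⟩}] is in bijection with S_k. -/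
/-- Length = number of inversions on `{1, …, n}`. -/
def len (n : ℕ) (w : Equiv.Perm ℕ) : ℕ :=
  ((Finset.Icc 1 n ×ˢ Finset.Icc 1 n).filter fun q => q.1 < q.2 ∧ w q.2 < w q.1).card

/-- Minimal-length double coset representatives `[W_I \ W_n / W_J]`. -/
def minReps (n : ℕ) (I J : Finset ℕ) : Set (Equiv.Perm ℕ) :=
  {w | w ∈ parab (delta n) ∧ ∀ u ∈ parab I, ∀ v ∈ parab J, len n w ≤ len n (u * w * v)}

/-- `W(L^{⟨r⟩})`: the block permutations `w°(ir + l) = w(i)r + l`, `w ∈ S_k`. -/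
def blockPerms (k r : ℕ) : Set (Equiv.Perm ℕ) :=
  {σ | ∃ w : Equiv.Perm (Fin k), ∀ (i : Fin k) (l : ℕ), 1 ≤ l → l ≤ r →
    σ ((i : ℕ) * r + l) = (w i : ℕ) * r + l}

/-!
Send `w ∈ S_k` to the block permutation `w°`, which moves the block `{ir+1, …, ir+r}` rigidly
onto the block of `w(i)`. This is injective, and it is onto `W(L^{⟨r⟩})` because every element
of `S_n` fixes the positions outside `{1, …, n}`. Each `w°` is a minimal representative: the
generators of `W^{⟨r⟩}` are the swaps `(x, x+1)` with `r ∤ x`, which preserve blocks, so for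
`u, v ∈ W^{⟨r⟩}` the permutation `u w° v` sends every position into the same block as `w°`
does. Since `w°` is increasing inside each block, each inversion of `w°` separates two blocks
and so remains an inversion of `u w° v`.
-/

open Equiv MulAction

section Parabolic

lemma parab_le_iff {S : Finset ℕ} {H : Subgroup (Perm ℕ)} :
    parab S ≤ H ↔ ∀ i ∈ S, swap i (i + 1) ∈ H := by
  rw [parab, Subgroup.closure_le]
  exact ⟨fun h i hi => h ⟨i, hi, rfl⟩, fun h _ ⟨i, hi, e⟩ => e ▸ h i hi⟩

lemma parab_mono {S T : Finset ℕ} (h : S ⊆ T) : parab S ≤ parab T :=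
  parab_le_iff.2 fun i hi => Subgroup.subset_closure ⟨i, h hi, rfl⟩

lemma mem_orbit_parab {S : Finset ℕ} {a b : ℕ} (hab : a ≤ b)
    (hS : ∀ i, a ≤ i → i < b → i ∈ S) : b ∈ orbit (parab S) a := by
  induction b, hab using Nat.le_induction with
  | base => exact mem_orbit_self a
  | succ b hab ih =>
    have hswap : swap b (b + 1) ∈ parab S :=
      Subgroup.subset_closure ⟨b, hS b hab (by omega), rfl⟩
    rw [← swap_apply_left b (b + 1)]
    exact mem_orbit_of_mem_orbit ⟨swap b (b + 1), hswap⟩ (ih fun i h1 h2 => hS i h1 (by omega))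

lemma apply_mem_of_forall_notMem {σ : Perm ℕ} {s : Finset ℕ} (hσ : ∀ p ∉ s, σ p = p)
    {p : ℕ} (hp : p ∈ s) : σ p ∈ s := by
  by_contra h
  exact h (by rwa [σ.injective (hσ _ h)])

lemma mem_parab_delta_iff {n : ℕ} {σ : Perm ℕ} :
    σ ∈ parab (delta n) ↔ ∀ p ∉ Finset.Icc 1 n, σ p = p := by
  constructor
  · intro hσ
    have : parab (delta n) ≤ fixingSubgroup (Perm ℕ) ((Finset.Icc 1 n : Finset ℕ) : Set ℕ)ᶜ := by
      refine parab_le_iff.2 fun i hi => (mem_fixingSubgroup_iff _).2 fun p hp => ?_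
      simp only [delta, Finset.mem_Icc, Set.mem_compl_iff, Finset.coe_Icc, Set.mem_Icc] at hi hp
      exact swap_apply_of_ne_of_ne (by omega) (by omega)
    exact fun p hp => (mem_fixingSubgroup_iff _).1 (this hσ) p hp
  · intro hσ
    have hswap : ∀ τ ∈ {τ | ∃ i ∈ delta n, τ = swap i (i + 1)}, τ.IsSwap := by
      rintro τ ⟨i, -, rfl⟩
      exact ⟨i, i + 1, by omega, rfl⟩
    refine (mem_closure_isSwap hswap).2 ⟨(Finset.Icc 1 n).finite_toSet.subset fun p hp => ?_, ?_⟩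
    · by_contra h
      exact hp (hσ p h)
    · intro p
      by_cases hp : p ∈ Finset.Icc 1 n
      · have hσp := apply_mem_of_forall_notMem hσ hp
        simp only [Finset.mem_Icc] at hp hσp
        have hconn : ∀ b, 1 ≤ b → b ≤ n → b ∈ orbit (parab (delta n)) 1 := fun b h1 h2 =>
          mem_orbit_parab h1 fun i hi1 hi2 => by simp only [delta, Finset.mem_Icc]; omega
        exact (orbit_eq_iff.2 (hconn p hp.1 hp.2)) ▸ hconn _ hσp.1 hσp.2
      · rw [hσ p hp]
        exact mem_orbit_self p

end Parabolic

section Blocks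

variable {k r : ℕ}

def blockPos (k r : ℕ) (q : Fin k × Fin r) : ℕ := finProdFinEquiv q + 1

lemma blockPos_mk (i : Fin k) (j : Fin r) : blockPos k r (i, j) = (i : ℕ) * r + (j + 1) := by
  simp only [blockPos, finProdFinEquiv_apply_val]
  ring

lemma blockPos_injective : Function.Injective (blockPos k r) := fun _ _ h =>
  finProdFinEquiv.injective (Fin.val_injective (Nat.add_right_cancel h))

lemma mem_range_blockPos_iff {p : ℕ} :
    p ∈ Set.range (blockPos k r) ↔ p ∈ Finset.Icc 1 (k * r) := by
  rw [Finset.mem_Icc]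
  constructor
  · rintro ⟨q, rfl⟩
    exact ⟨Nat.le_add_left 1 _, (finProdFinEquiv q).isLt⟩
  · rintro ⟨h1, h2⟩
    refine ⟨finProdFinEquiv.symm ⟨p - 1, by omega⟩, ?_⟩
    simp only [blockPos, Equiv.apply_symm_apply]
    omega

def blockIdx (r p : ℕ) : ℕ := (p - 1) / r

lemma blockIdx_monotone : Monotone (blockIdx r) := fun _ _ h =>
  Nat.div_le_div_right (Nat.sub_le_sub_right h 1)

lemma blockIdx_blockPos (q : Fin k × Fin r) : blockIdx r (blockPos k r q) = q.1 := by
  obtain ⟨i, j⟩ := q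
  rw [blockIdx, blockPos, Nat.add_sub_cancel, finProdFinEquiv_apply_val,
    Nat.add_mul_div_left _ _ j.pos, Nat.div_eq_of_lt j.isLt, Nat.zero_add]

lemma blockPos_lt_blockPos {i i' : Fin k} (h : i < i') (j j' : Fin r) :
    blockPos k r (i, j) < blockPos k r (i', j') := by
  have : (i : ℕ) * r + r ≤ i' * r := by
    simpa [Nat.succ_mul] using Nat.mul_le_mul_right r (Nat.succ_le_of_lt h)
  rw [blockPos_mk, blockPos_mk]
  omega

noncomputable def blockPerm (k r : ℕ) (w : Perm (Fin k)) : Perm ℕ :=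
  Perm.extendDomain (w.prodCongr (Equiv.refl (Fin r))) (Equiv.ofInjective _ blockPos_injective)

lemma blockPerm_blockPos (w : Perm (Fin k)) (q : Fin k × Fin r) :
    blockPerm k r w (blockPos k r q) = blockPos k r (w q.1, q.2) :=
  Perm.extendDomain_apply_image _ (Equiv.ofInjective _ blockPos_injective) q

lemma blockPerm_apply_of_notMem {w : Perm (Fin k)} {p : ℕ} (hp : p ∉ Finset.Icc 1 (k * r)) :
    blockPerm k r w p = p :=
  Perm.extendDomain_apply_not_subtype _ _ (mt mem_range_blockPos_iff.1 hp)

lemma blockPerm_mem_blockPerms (w : Perm (Fin k)) : blockPerm k r w ∈ blockPerms k r :=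
  ⟨w, fun i l h1 h2 => by
    simpa [blockPos_mk, Nat.sub_add_cancel h1] using blockPerm_blockPos w (i, ⟨l - 1, by omega⟩)⟩

lemma blockPerm_mem_parab (w : Perm (Fin k)) : blockPerm k r w ∈ parab (delta (k * r)) :=
  mem_parab_delta_iff.2 fun _ => blockPerm_apply_of_notMem

lemma blockPerm_injective (hr : 0 < r) : Function.Injective (blockPerm k r) := by
  intro w w' h
  ext i
  have := blockPerm_blockPos w (i, ⟨0, hr⟩)
  rw [h, blockPerm_blockPos] at this
  exact congrArg Fin.val (congrArg Prod.fst (blockPos_injective this)).symm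

lemma eq_blockPerm_of_mem_parab {σ : Perm ℕ} {w : Perm (Fin k)}
    (hw : ∀ (i : Fin k) (l : ℕ), 1 ≤ l → l ≤ r → σ ((i : ℕ) * r + l) = (w i : ℕ) * r + l)
    (hσ : σ ∈ parab (delta (k * r))) : σ = blockPerm k r w := by
  ext p
  by_cases hp : p ∈ Finset.Icc 1 (k * r)
  · obtain ⟨⟨i, j⟩, rfl⟩ := mem_range_blockPos_iff.2 hp
    rw [blockPerm_blockPos, blockPos_mk, blockPos_mk, hw i _ (by omega) (by omega)]
  · rw [blockPerm_apply_of_notMem hp, mem_parab_delta_iff.1 hσ p hp]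

end Blocks

section Minimality

def fiberwisePerms {α β : Type*} (f : α → β) : Subgroup (Perm α) where
  carrier := {σ | ∀ x, f (σ x) = f x}
  mul_mem' ha hb x := (ha _).trans (hb x)
  one_mem' _ := rfl
  inv_mem' {σ} h x := by simpa using (h (σ⁻¹ x)).symm

lemma swap_mem_fiberwisePerms {α β : Type*} [DecidableEq α] {f : α → β} {a b : α}
    (h : f a = f b) : swap a b ∈ fiberwisePerms f := by
  intro x
  rw [swap_apply_def]
  split_ifs with ha hb
  · rw [ha, h]
  · rw [hb, h]
  · rfl

lemma len_le_len_of_comp_eq {β : Type*} [Preorder β] {n : ℕ} {σ τ : Perm ℕ} {f : ℕ → β}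
    (hf : Monotone f) (hτ : ∀ p ∈ Finset.Icc 1 n, f (τ p) = f (σ p))
    (hσ : ∀ p ∈ Finset.Icc 1 n, ∀ q ∈ Finset.Icc 1 n, p < q → σ q < σ p → f (σ q) < f (σ p)) :
    len n σ ≤ len n τ := by
  refine Finset.card_le_card fun q hq => ?_
  simp only [Finset.mem_filter, Finset.mem_product] at hq ⊢
  obtain ⟨⟨h1, h2⟩, hlt, hinv⟩ := hq
  refine ⟨⟨h1, h2⟩, hlt, hf.reflect_lt ?_⟩
  rw [hτ _ h1, hτ _ h2]
  exact hσ _ h1 _ h2 hlt hinv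

variable {k r : ℕ}

lemma parab_le_fiberwisePerms_blockIdx (k r : ℕ) :
    parab (delta (k * r) \ deltaK k r) ≤ fiberwisePerms (blockIdx r) := by
  refine parab_le_iff.2 fun x hx => swap_mem_fiberwisePerms ?_
  simp only [Finset.mem_sdiff, delta, deltaK, Finset.mem_Icc, Finset.mem_image] at hx
  obtain ⟨⟨hx1, hx2⟩, hx3⟩ := hx
  have hndvd : ¬ r ∣ x := by
    rintro ⟨m, rfl⟩
    have hm : m < k := Nat.lt_of_mul_lt_mul_left (a := r) (by rw [Nat.mul_comm r k]; omega)
    exact hx3 ⟨m, ⟨Nat.pos_of_ne_zero (by rintro rfl; simp at hx1), by omega⟩, Nat.mul_comm _ _⟩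
  obtain ⟨y, rfl⟩ : ∃ y, x = y + 1 := ⟨x - 1, by omega⟩
  rw [blockIdx, blockIdx, Nat.add_sub_cancel, Nat.add_sub_cancel, Nat.succ_div, if_neg hndvd,
    Nat.add_zero]

lemma blockIdx_blockPerm_lt_of_inversion (w : Perm (Fin k)) {p q : ℕ}
    (hp : p ∈ Finset.Icc 1 (k * r)) (hq : q ∈ Finset.Icc 1 (k * r)) (hpq : p < q)
    (hinv : blockPerm k r w q < blockPerm k r w p) :
    blockIdx r (blockPerm k r w q) < blockIdx r (blockPerm k r w p) := by
  obtain ⟨⟨i, j⟩, rfl⟩ := mem_range_blockPos_iff.2 hp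
  obtain ⟨⟨i', j'⟩, rfl⟩ := mem_range_blockPos_iff.2 hq
  rw [blockPerm_blockPos, blockPerm_blockPos] at hinv ⊢
  rw [blockIdx_blockPos, blockIdx_blockPos]
  rcases lt_trichotomy (w i') (w i) with h | h | h
  · exact h
  · rw [w.injective h] at hpq
    rw [h] at hinv
    simp only [blockPos_mk] at hpq hinv
    omega
  · exact absurd hinv (blockPos_lt_blockPos h _ _).asymm

lemma blockIdx_mul_blockPerm_mul (w : Perm (Fin k)) {u v : Perm ℕ}
    (hu : u ∈ parab (delta (k * r) \ deltaK k r)) (hv : v ∈ parab (delta (k * r) \ deltaK k r))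
    {p : ℕ} (hp : p ∈ Finset.Icc 1 (k * r)) :
    blockIdx r ((u * blockPerm k r w * v) p) = blockIdx r (blockPerm k r w p) := by
  have hvp : v p ∈ Finset.Icc 1 (k * r) := apply_mem_of_forall_notMem
    (mem_parab_delta_iff.1 (parab_mono Finset.sdiff_subset hv)) hp
  have hublk : ∀ x, blockIdx r (u x) = blockIdx r x := parab_le_fiberwisePerms_blockIdx k r hu
  have hvblk : blockIdx r (v p) = blockIdx r p := parab_le_fiberwisePerms_blockIdx k r hv p
  obtain ⟨q, rfl⟩ := mem_range_blockPos_iff.2 hp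
  obtain ⟨q', hq'⟩ := mem_range_blockPos_iff.2 hvp
  rw [← hq', blockIdx_blockPos, blockIdx_blockPos] at hvblk
  rw [Perm.mul_apply, Perm.mul_apply, hublk, ← hq', blockPerm_blockPos, blockPerm_blockPos,
    blockIdx_blockPos, blockIdx_blockPos, Fin.val_injective hvblk]

lemma blockPerm_mem_minReps (w : Perm (Fin k)) :
    blockPerm k r w ∈ minReps (k * r) (delta (k * r) \ deltaK k r) (delta (k * r) \ deltaK k r) :=
  ⟨blockPerm_mem_parab w, fun _ hu _ hv =>
    len_le_len_of_comp_eq blockIdx_monotone (fun _ => blockIdx_mul_blockPerm_mul w hu hv)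
      fun _ hp _ hq => blockIdx_blockPerm_lt_of_inversion w hp hq⟩

end Minimality

theorem blockPerms_cap_minReps_equiv_permFinK_general (k r n : ℕ) (hr : 0 < r)
    (hn : n = k * r) :
    Nonempty
      ({σ : Equiv.Perm ℕ //
          σ ∈ blockPerms k r ∧
          σ ∈ minReps n (delta n \ deltaK k r) (delta n \ deltaK k r)} ≃
        Equiv.Perm (Fin k)) := by
  subst hn
  let toBlock (w : Perm (Fin k)) : {σ : Perm ℕ // σ ∈ blockPerms k r ∧
      σ ∈ minReps (k * r) (delta (k * r) \ deltaK k r) (delta (k * r) \ deltaK k r)} :=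
    ⟨blockPerm k r w, blockPerm_mem_blockPerms w, blockPerm_mem_minReps w⟩
  have hinj : Function.Injective toBlock := fun _ _ h =>
    blockPerm_injective hr (congrArg Subtype.val h)
  have hsurj : Function.Surjective toBlock := by
    rintro ⟨σ, ⟨w, hw⟩, hσ, -⟩
    exact ⟨w, Subtype.ext (eq_blockPerm_of_mem_parab hw hσ).symm⟩
  exact ⟨(Equiv.ofBijective toBlock ⟨hinj, hsurj⟩).symm⟩

theorem blockPerms_cap_minReps_equiv_permFinK (k r n : ℕ) (hk : 0 < k) (hr : 0 < r)
    (hn : n = k * r) :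
    Nonempty
      ({σ : Equiv.Perm ℕ //
          σ ∈ blockPerms k r ∧
          σ ∈ minReps n (delta n \ deltaK k r) (delta n \ deltaK k r)} ≃
        Equiv.Perm (Fin k)) :=
  blockPerms_cap_minReps_equiv_permFinK_general k r n hr hn
end
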